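/- arXiv:1511.03567 — 4 statements merged into one kernel-verified Lean document; each statement's English description precedes it below -/
import Mathlib

section
/- The Hansen coefficient X_0^{-3,2}(e) vanishes for all eccentricities e with 0 ≤ e < 1; that is, the constant term (in mean anomaly M) of the Fourier expansion of (a/r)^3 e^{2if} is zero, where r and f are the orbital radius and true anomaly of a Kepler orbit with eccentricity e. -/
open Real intervalIntegral

/-- The key algebraic identity behind the vanishing of `X_0^{-3,2}`. -/
lemma hansen_alg (cc ss bb ee : ℂ) (hs : ss ^ 2 = 1 - cc ^ 2) (hb : bb ^ 2 = 1 - ee ^ 2) :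
    (cc - ee + Complex.I * (bb * ss)) ^ 2 * (3 * ee ^ 2 * (1 - ee * cc) ^ 3) ^ 2
      = ((ee ^ 2 * (cc * (3 * cc - ee * cc ^ 2 - 2 * ee)
            + ss * (-3 * ss + 2 * ee * cc * ss)) + Complex.I * (3 * ee * bb * ss))
            * (3 * ee ^ 2 * (1 - ee * cc) ^ 3)
          - (ee ^ 2 * (ss * (3 * cc - ee * cc ^ 2 - 2 * ee))
            + Complex.I * (bb * (1 + 2 * ee ^ 2) - 3 * ee * bb * cc))
            * (9 * ee ^ 3 * ss * (1 - ee * cc) ^ 2)) * (1 - ee * cc) ^ 4 := by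
  linear_combination
    ((9)*ss^2*bb^2*ee^4 + (-54)*cc*ss^2*bb^2*ee^5 + (135)*cc^2*ss^2*bb^2*ee^6 +
      (-180)*cc^3*ss^2*bb^2*ee^7 + (135)*cc^4*ss^2*bb^2*ee^8 + (-54)*cc^5*ss^2*bb^2*ee^9 +
      (9)*cc^6*ss^2*bb^2*ee^10) * Complex.I_sq
    + ((9)*ee^4 + (-18)*ee^6 + (-9)*bb^2*ee^4 + (-42)*cc*ee^5 + (108)*cc*ee^7 +
      (54)*cc*bb^2*ee^5 + (60)*cc^2*ee^6 + (-270)*cc^2*ee^8 + (-135)*cc^2*bb^2*ee^6 +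
      (18)*cc^3*ee^7 + (360)*cc^3*ee^9 + (180)*cc^3*bb^2*ee^7 + (-150)*cc^4*ee^8 +
      (-270)*cc^4*ee^10 + (-135)*cc^4*bb^2*ee^8 + (186)*cc^5*ee^9 + (108)*cc^5*ee^11 +
      (54)*cc^5*bb^2*ee^9 + (-108)*cc^6*ee^10 + (-18)*cc^6*ee^12 + (-9)*cc^6*bb^2*ee^10 +
      (30)*cc^7*ee^11 + (-3)*cc^8*ee^12) * hs
    + ((-9)*ee^4 + (54)*cc*ee^5 + (9)*cc^2*ee^4 + (-135)*cc^2*ee^6 + (-54)*cc^3*ee^5 +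
      (180)*cc^3*ee^7 + (135)*cc^4*ee^6 + (-135)*cc^4*ee^8 + (-180)*cc^5*ee^7 +
      (54)*cc^5*ee^9 + (135)*cc^6*ee^8 + (-9)*cc^6*ee^10 + (-54)*cc^7*ee^9 +
      (9)*cc^8*ee^10) * hb

/-- The Hansen coefficient `X_0^{-3,2}(e)` vanishes for all `0 ≤ e < 1`:
the average over the mean anomaly `M` of `(a/r)^3 e^{2if}` is zero.
Parametrizing the Kepler orbit by the eccentric anomaly `E`
(`M = E - e sin E`, `r/a = 1 - e cos E`,
`e^{if} = (cos E - e + i √(1-e²) sin E)/(1 - e cos E)`, `dM = (1 - e cos E) dE`),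
this average is `(1/2π) ∫₀^{2π} (cos E - e + i √(1-e²) sin E)² / (1 - e cos E)⁴ dE`. -/
theorem stmt_7 (e : ℝ) (he0 : 0 ≤ e) (he1 : e < 1) :
    (1 / (2 * Real.pi) : ℂ) *
      ∫ E in (0 : ℝ)..(2 * Real.pi),
        (((Real.cos E - e : ℝ) : ℂ) + Complex.I * ((Real.sqrt (1 - e ^ 2) * Real.sin E : ℝ) : ℂ)) ^ 2
          / (((1 - e * Real.cos E : ℝ) : ℂ)) ^ 4 = 0 := by
  have hupos : ∀ E : ℝ, 0 < 1 - e * Real.cos E := by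
    intro E
    nlinarith [Real.cos_le_one E, Real.neg_one_le_cos E]
  have huC : ∀ E : ℝ, ((1 - e * Real.cos E : ℝ) : ℂ) ≠ 0 := fun E => by
    exact_mod_cast (hupos E).ne'
  set g : ℝ → ℂ := fun E =>
    (((Real.cos E - e : ℝ) : ℂ) + Complex.I * ((Real.sqrt (1 - e ^ 2) * Real.sin E : ℝ) : ℂ)) ^ 2
      / (((1 - e * Real.cos E : ℝ) : ℂ)) ^ 4 with hg
  have hInt : IntervalIntegrable g MeasureTheory.volume 0 (2 * Real.pi) := by
    apply Continuous.intervalIntegrable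
    apply Continuous.div
    · fun_prop
    · fun_prop
    · intro E
      exact pow_ne_zero _ (huC E)
  have hsinsq : ∀ E : ℝ, Real.sin E ^ 2 = 1 - Real.cos E ^ 2 := fun E => by
    nlinarith [Real.sin_sq_add_cos_sq E]
  rcases he0.eq_or_lt with h0 | h0
  · -- case e = 0
    subst h0
    set F : ℝ → ℂ := fun E =>
      (Real.sin E : ℂ) * (Real.cos E : ℂ) + Complex.I * ((Real.sin E : ℂ) * (Real.sin E : ℂ)) with hF
    have hder : ∀ x : ℝ, HasDerivAt F (g x) x := by
      intro x
      have hc := (Real.hasDerivAt_cos x).ofReal_comp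
      have hs := (Real.hasDerivAt_sin x).ofReal_comp
      have h := (hs.mul hc).add ((hs.mul hs).const_mul Complex.I)
      convert h using 1
      · rfl
      · rfl
      rw [hg]
      push_cast [Real.sqrt_one]
      have hsC : (Complex.sin x) ^ 2 = 1 - (Complex.cos x) ^ 2 := by
        linear_combination Complex.sin_sq_add_cos_sq (x : ℂ)
      norm_num
      linear_combination ((Complex.sin x) ^ 2) * Complex.I_sq
    have := intervalIntegral.integral_eq_sub_of_hasDerivAt (fun x _ => hder x) hInt
    rw [this, hF]
    simp
  · -- case 0 < e
    set β := Real.sqrt (1 - e ^ 2) with hβ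
    have hb2 : β ^ 2 = 1 - e ^ 2 := Real.sq_sqrt (by nlinarith)
    have hbC : (β : ℂ) ^ 2 = 1 - (e : ℂ) ^ 2 := by exact_mod_cast hb2
    have heC : (e : ℂ) ≠ 0 := by exact_mod_cast h0.ne'
    set F : ℝ → ℂ := fun E =>
      ((e : ℂ) ^ 2 * ((Real.sin E : ℂ) * (3 * (Real.cos E : ℂ) - e * ((Real.cos E : ℂ) * (Real.cos E : ℂ)) - 2 * e))
        + Complex.I * ((β : ℂ) * (1 + 2 * (e : ℂ) ^ 2) - 3 * e * β * (Real.cos E : ℂ)))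
        / (3 * (e : ℂ) ^ 2 * ((1 - (e : ℂ) * (Real.cos E : ℂ)) *
            ((1 - (e : ℂ) * (Real.cos E : ℂ)) * (1 - (e : ℂ) * (Real.cos E : ℂ))))) with hF
    have hder : ∀ x : ℝ, HasDerivAt F (g x) x := by
      intro x
      have hc := (Real.hasDerivAt_cos x).ofReal_comp
      have hs := (Real.hasDerivAt_sin x).ofReal_comp
      have hu0 : ((1 : ℂ) - (e : ℂ) * (Real.cos x : ℂ)) ≠ 0 := by
        exact_mod_cast (hupos x).ne'
      have hD0 : (3 * (e : ℂ) ^ 2 * ((1 - (e : ℂ) * (Real.cos x : ℂ)) *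
            ((1 - (e : ℂ) * (Real.cos x : ℂ)) * (1 - (e : ℂ) * (Real.cos x : ℂ))))) ≠ 0 :=
        mul_ne_zero (mul_ne_zero three_ne_zero (pow_ne_zero _ heC))
          (mul_ne_zero hu0 (mul_ne_zero hu0 hu0))
      have hN := ((hs.mul (((hc.const_mul (3 : ℂ)).sub ((hc.mul hc).const_mul (e : ℂ))).sub_const
          (2 * (e : ℂ)))).const_mul ((e : ℂ) ^ 2)).add
        (((hc.const_mul (3 * (e : ℂ) * (β : ℂ))).const_sub ((β : ℂ) * (1 + 2 * (e : ℂ) ^ 2))).const_mul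
          Complex.I)
      have hu := (hc.const_mul (e : ℂ)).const_sub 1
      have hD := (hu.mul (hu.mul hu)).const_mul (3 * (e : ℂ) ^ 2)
      have h := hN.div hD hD0
      convert h using 1
      · rfl
      · rfl
      rw [hg]
      simp only [Pi.mul_apply, Pi.add_apply, Pi.sub_apply]
      have hsC : (Complex.sin x) ^ 2 = 1 - (Complex.cos x) ^ 2 := by
        linear_combination Complex.sin_sq_add_cos_sq (x : ℂ)
      rw [div_eq_div_iff (pow_ne_zero _ (huC x)) (pow_ne_zero _ hD0)]
      push_cast
      linear_combination hansen_alg (Complex.cos x) (Complex.sin x) (β : ℂ) (e : ℂ) hsC hbC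
    have := intervalIntegral.integral_eq_sub_of_hasDerivAt (fun x _ => hder x) hInt
    rw [this, hF]
    simp
end

section
/- The Hansen coefficient X_0^{-3,-2}(e) vanishes for all e ∈ [0,1): the average over mean anomaly of (a/r)^3 e^{-2if} is zero for a Kepler orbit of eccentricity e. -/
open Complex intervalIntegral
set_option maxHeartbeats 1000000

lemma hansen_aux (eC bC n d n' d' : ℂ) (hd : d ≠ 0) (hb : bC ≠ 0)
    (hu : n'*d - n*d' = -Complex.I*bC*n)
    (hv : eC*n^2 + 2*n*d + eC*d^2 = 2*bC^2*n) :
    n^2/d^4 = Complex.I/(2*bC^3) *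
      ((((n'*n + n*n')*d + n*n*d' + eC*(n'*(d*d) + n*(d'*d + d*d'))
          + eC/3*(n'*(n*n) + n*(n'*n + n*n'))) * (d*(d*d)) -
        (n*n*d + eC*(n*(d*d)) + eC/3*(n*(n*n))) * (d'*(d*d) + d*(d'*d + d*d'))) / (d*(d*d))^2) := by
  have key : (((n'*n + n*n')*d + n*n*d' + eC*(n'*(d*d) + n*(d'*d + d*d'))
          + eC/3*(n'*(n*n) + n*(n'*n + n*n'))) * (d*(d*d)) -
        (n*n*d + eC*(n*(d*d)) + eC/3*(n*(n*n))) * (d'*(d*d) + d*(d'*d + d*d')))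
      = (d*d) * ((n'*d - n*d') * (eC*n^2 + 2*n*d + eC*d^2)) := by ring
  rw [key, hu, hv]
  field_simp
  linear_combination (n^2) * Complex.I_sq

/-- The Hansen coefficient `X_0^{-3,-2}(e)` vanishes for all `0 ≤ e < 1`:
the average over the mean anomaly `M` of `(a/r)^3 e^{-2if}` is zero.
Parametrizing the Kepler orbit by the eccentric anomaly `E`
(`M = E - e sin E`, `r/a = 1 - e cos E`,
`e^{-if} = (cos E - e - i √(1-e²) sin E)/(1 - e cos E)`, `dM = (1 - e cos E) dE`),
this average is `(1/2π) ∫₀^{2π} (cos E - e - i √(1-e²) sin E)² / (1 - e cos E)⁴ dE`. -/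
theorem stmt_8 (e : ℝ) (he0 : 0 ≤ e) (he1 : e < 1) :
    (1 / (2 * Real.pi) : ℂ) *
      ∫ E in (0 : ℝ)..(2 * Real.pi),
        (((Real.cos E - e : ℝ) : ℂ) - Complex.I * ((Real.sqrt (1 - e ^ 2) * Real.sin E : ℝ) : ℂ)) ^ 2
          / (((1 - e * Real.cos E : ℝ) : ℂ)) ^ 4 = 0 := by
  have hb2' : (0:ℝ) < 1 - e^2 := by nlinarith
  set b : ℝ := Real.sqrt (1 - e^2) with hbdef
  have hbpos : 0 < b := Real.sqrt_pos.mpr hb2'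
  have hb2 : (b:ℂ)^2 = 1 - (e:ℂ)^2 := by
    have h : b^2 = 1 - e^2 := Real.sq_sqrt hb2'.le
    rw [show ((b:ℂ)^2) = ((b^2:ℝ):ℂ) by push_cast; ring, h]; push_cast; ring
  have hbne : (b:ℂ) ≠ 0 := by exact_mod_cast hbpos.ne'
  set N : ℝ → ℂ := fun E => ((Real.cos E - e : ℝ) : ℂ) - Complex.I * ((b * Real.sin E : ℝ) : ℂ) with hNdef
  set D : ℝ → ℂ := fun E => ((1 - e * Real.cos E : ℝ) : ℂ) with hDdef
  have hD0 : ∀ E : ℝ, D E ≠ 0 := by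
    intro E
    have h1 : 0 < 1 - e * Real.cos E := by
      nlinarith [Real.cos_le_one E, Real.neg_one_le_cos E]
    simp only [hDdef]
    exact_mod_cast h1.ne'
  set F : ℝ → ℂ := fun E =>
    (Complex.I / (2 * (b:ℂ)^3)) *
      ((N E * N E * D E + (e:ℂ) * (N E * (D E * D E)) + ((e:ℂ)/3) * (N E * (N E * N E))) /
        (D E * (D E * D E))) with hFdef
  have hN : ∀ E : ℝ, HasDerivAt N (((-Real.sin E : ℝ) : ℂ) - Complex.I * ((b * Real.cos E : ℝ) : ℂ)) E := by
    intro E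
    have h1 : HasDerivAt (fun E : ℝ => ((Real.cos E - e : ℝ) : ℂ)) ((-Real.sin E : ℝ) : ℂ) E :=
      ((Real.hasDerivAt_cos E).sub_const e).ofReal_comp
    have h2 : HasDerivAt (fun E : ℝ => ((b * Real.sin E : ℝ) : ℂ)) ((b * Real.cos E : ℝ) : ℂ) E := by
      have := ((Real.hasDerivAt_sin E).const_mul b).ofReal_comp
      simpa using this
    exact h1.sub (h2.const_mul Complex.I)
  have hD : ∀ E : ℝ, HasDerivAt D ((e * Real.sin E : ℝ) : ℂ) E := by
    intro E
    have h : HasDerivAt (fun E : ℝ => 1 - e * Real.cos E) (e * Real.sin E) E := by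
      simpa using ((Real.hasDerivAt_cos E).const_mul e).const_sub 1
    exact h.ofReal_comp
  have hF : ∀ E : ℝ, HasDerivAt F (N E ^ 2 / D E ^ 4) E := by
    intro E
    have hNE := hN E
    have hDE := hD E
    set N' : ℂ := ((-Real.sin E : ℝ) : ℂ) - Complex.I * ((b * Real.cos E : ℝ) : ℂ) with hN'def
    set D' : ℂ := ((e * Real.sin E : ℝ) : ℂ) with hD'def
    have h1 := (hNE.mul hNE).mul hDE
    have h2 := (hNE.mul (hDE.mul hDE)).const_mul (e:ℂ)
    have h3 := (hNE.mul (hNE.mul hNE)).const_mul ((e:ℂ)/3)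
    have hG := (h1.add h2).add h3
    have hDcube := hDE.mul (hDE.mul hDE)
    have hDcube_ne : D E * (D E * D E) ≠ 0 := by
      have := hD0 E; exact mul_ne_zero this (mul_ne_zero this this)
    have hQ := hG.div hDcube hDcube_ne
    have hFE := hQ.const_mul (Complex.I / (2 * (b:ℂ)^3))
    have hu : N' * D E - N E * D' = -Complex.I*(b:ℂ)*(N E) := by
      simp only [hNdef, hDdef, hN'def, hD'def]
      push_cast
      linear_combination (Complex.sin (E:ℂ)) * hb2
        + Complex.I*(b:ℂ)*(e:ℂ) * (Complex.sin_sq_add_cos_sq (E:ℂ))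
        + (-(Complex.sin (E:ℂ))*(b:ℂ)^2) * Complex.I_sq
    have hv : (e:ℂ)*(N E)^2 + 2*(N E)*(D E) + (e:ℂ)*(D E)^2 = 2*(b:ℂ)^2*(N E) := by
      simp only [hNdef, hDdef]
      push_cast
      linear_combination (2*Complex.I*(b:ℂ)*(Complex.sin (E:ℂ)) - (e:ℂ)*(Complex.sin (E:ℂ))^2
          - 2*((Complex.cos (E:ℂ)) - (e:ℂ))) * hb2
        + (e:ℂ)*((e:ℂ)^2-1) * (Complex.sin_sq_add_cos_sq (E:ℂ))
        + ((e:ℂ)*(b:ℂ)^2*(Complex.sin (E:ℂ))^2) * Complex.I_sq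
    rw [hansen_aux (e:ℂ) (b:ℂ) (N E) (D E) N' D' (hD0 E) hbne hu hv]
    exact hFE
  have hcont : Continuous fun E : ℝ => N E ^ 2 / D E ^ 4 := by
    apply Continuous.div
    · exact ((Complex.continuous_ofReal.comp (Real.continuous_cos.sub continuous_const)).sub
        (continuous_const.mul
          (Complex.continuous_ofReal.comp (continuous_const.mul Real.continuous_sin)))).pow 2
    · exact (Complex.continuous_ofReal.comp
        ((continuous_const.sub (continuous_const.mul Real.continuous_cos)))).pow 4
    · exact fun E => pow_ne_zero 4 (hD0 E)
  have hint := intervalIntegral.integral_eq_sub_of_hasDerivAt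
    (a := (0:ℝ)) (b := 2*Real.pi) (f := F) (f' := fun E => N E ^ 2 / D E ^ 4)
    (fun E _ => hF E) (hcont.intervalIntegrable 0 (2*Real.pi))
  simp only [hNdef, hDdef] at hint
  rw [hint]
  have hper : F (2 * Real.pi) = F 0 := by
    simp [hFdef, hNdef, hDdef, Real.cos_two_pi, Real.sin_two_pi]
  rw [hper, sub_self, mul_zero]
end

section
/- Let l ≥ 0 and let m, s be integers with -l ≤ m, s ≤ l and m + s ≥ 0. Define U_l^{m,s}(ε) = Σ_r (-1)^{l-m-r} C(l+m, m+s+r) C(l-m, r) (cos(ε/2))^{m+s+2r} (sin(ε/2))^{-m-s+2(l-r)}, summed over r from max(0, -(m+s)) to min(l-s, l-m). Then U_l^{m,s}(ε) = (-1)^{l-m} C(l+m, l-s) (cos(ε/2))^{m+s} (sin(ε/2))^{s-m} · ₂F₁(-l+s, l+s+1, m+s+1; cos²(ε/2)) for all ε ∈ (0, π), where ₂F₁ is the Gauss hypergeometric series (which terminates since -l+s ≤ 0). -/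
/-- Giacaglia's finite-sum form of the rotation coefficients `U_l^{m,s}(ε)`:
`Σ_r (-1)^{l-m-r} C(l+m, m+s+r) C(l-m, r) cos^{m+s+2r}(ε/2) sin^{-m-s+2(l-r)}(ε/2)`,
summed over `r` from `max(0, -(m+s))` to `min(l-s, l-m)`. -/
noncomputable def Ucoef (l m s : ℤ) (ε : ℝ) : ℝ :=
  ∑ r ∈ Finset.Icc (max 0 (-(m + s))) (min (l - s) (l - m)),
    (-1 : ℝ) ^ (l - m - r) * ((l + m).toNat.choose (m + s + r).toNat : ℝ) *
      ((l - m).toNat.choose r.toNat : ℝ) *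
      Real.cos (ε / 2) ^ (m + s + 2 * r) * Real.sin (ε / 2) ^ (-(m + s) + 2 * (l - r))

/-- Pochhammer symbol `(a)_n = a(a+1)⋯(a+n-1)`. -/
noncomputable def poch (a : ℝ) (n : ℕ) : ℝ := (ascPochhammer ℝ n).eval a

/-- The Gauss hypergeometric series `₂F₁(a,b,c;x) = Σ_n (a)_n(b)_n/((c)_n n!) xⁿ`. -/
noncomputable def hyp2F1 (a b c x : ℝ) : ℝ :=
  ∑' n : ℕ, poch a n * poch b n / (poch c n * (n.factorial : ℝ)) * x ^ n

open Finset

section Aux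

lemma poch_prod (n : ℕ) (x : ℝ) :
    poch x n = ∏ i ∈ Finset.range n, (x + i) := by
  unfold poch
  induction n with
  | zero => simp
  | succ n ih => rw [ascPochhammer_succ_eval, ih, Finset.prod_range_succ]

lemma poch_neg_zero {N n : ℕ} (h : N < n) : poch (-(N:ℝ)) n = 0 := by
  rw [poch_prod]
  exact Finset.prod_eq_zero (Finset.mem_range.mpr h) (by simp)

lemma poch_neg_eq {N n : ℕ} (h : n ≤ N) :
    poch (-(N:ℝ)) n = (-1 : ℝ)^n * (N.descFactorial n : ℝ) := by
  rw [poch_prod, Nat.descFactorial_eq_prod_range, Nat.cast_prod]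
  have h1 : ((-1:ℝ))^n = ∏ _i ∈ Finset.range n, (-1:ℝ) := by simp
  rw [h1, ← Finset.prod_mul_distrib]
  refine Finset.prod_congr rfl fun i hi => ?_
  have hiN : i ≤ N := le_of_lt (lt_of_lt_of_le (Finset.mem_range.mp hi) h)
  rw [Nat.cast_sub hiN]
  ring

lemma poch_nat (k n : ℕ) : poch ((k:ℝ)+1) n = ((k+n).factorial : ℝ) / (k.factorial : ℝ) := by
  have h := factorial_mul_ascPochhammer ℝ k n
  have hk : (k.factorial : ℝ) ≠ 0 := Nat.cast_ne_zero.mpr k.factorial_ne_zero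
  field_simp [poch]
  unfold poch
  linarith [h]

lemma descFactorial_cast {N n : ℕ} (h : n ≤ N) :
    (N.descFactorial n : ℝ) = (N.factorial : ℝ) / ((N-n).factorial : ℝ) := by
  have h1 := Nat.factorial_mul_descFactorial h
  have h2 : ((N-n).factorial : ℝ) ≠ 0 := Nat.cast_ne_zero.mpr (Nat.factorial_ne_zero _)
  field_simp
  rw [mul_comm]; exact_mod_cast congrArg (Nat.cast (R := ℝ)) h1

lemma coeff_rhs {N n : ℕ} (b k : ℕ) (hn : n ≤ N) :
    (((k+N).choose N : ℕ) : ℝ) *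
      (poch (-(N:ℝ)) n * poch (((b+k:ℕ):ℝ)+1) n / (poch ((k:ℝ)+1) n * (n.factorial : ℝ)))
    = (-1:ℝ)^n * ((k+N).choose (k+n) : ℝ) * ((b+k+n).choose n : ℝ) := by
  rw [poch_neg_eq hn, poch_nat, poch_nat, descFactorial_cast hn]
  rw [Nat.cast_choose ℝ (show N ≤ k+N by omega),
      Nat.cast_choose ℝ (show k+n ≤ k+N by omega),
      Nat.cast_choose ℝ (show n ≤ b+k+n by omega)]
  have e1 : k+N-N = k := by omega
  have e2 : k+N-(k+n) = N-n := by omega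
  have e3 : b+k+n-n = b+k := by omega
  rw [e1, e2, e3]
  have f0 : ∀ j : ℕ, ((j.factorial : ℕ):ℝ) ≠ 0 :=
    fun j => Nat.cast_ne_zero.mpr (Nat.factorial_ne_zero j)
  field_simp

lemma hyp2F1_term (N b k : ℕ) (x : ℝ) :
    (((k+N).choose N : ℕ):ℝ) * hyp2F1 (-(N:ℝ)) (((b+k:ℕ):ℝ)+1) ((k:ℝ)+1) x
    = ∑ n ∈ Finset.range (N+1),
        (-1:ℝ)^n * ((k+N).choose (k+n):ℝ) * ((b+k+n).choose n :ℝ) * x^n := by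
  unfold hyp2F1
  rw [tsum_eq_sum (s := Finset.range (N+1))
    (by intro n hn
        have hN : N < n := by
          simpa using Nat.lt_of_succ_le (not_lt.mp (fun h => hn (Finset.mem_range.mpr h)))
        rw [poch_neg_zero hN]
        simp)]
  rw [Finset.mul_sum]
  refine Finset.sum_congr rfl fun n hn => ?_
  have hn' : n ≤ N := Nat.lt_succ_iff.mp (Finset.mem_range.mp hn)
  rw [← mul_assoc, coeff_rhs b k hn']

lemma choose_shift {N k n i : ℕ} (hi : i ≤ n) (hn : n ≤ N) :
    (k+N).choose (k+i) * (N-i).choose (n-i) = (k+N).choose (k+n) * (k+n).choose (k+i) := by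
  have h := Nat.choose_mul (n := k+N) (k := k+n) (s := k+i) (by omega)
  rw [h]
  congr 2 <;> omega

lemma vandermonde_aux {N k n : ℕ} (b : ℕ) (hn : n ≤ N) :
    ∑ i ∈ range (n+1), (k+N).choose (k+i) * (b.choose i * (N-i).choose (n-i))
    = (k+N).choose (k+n) * (b+k+n).choose n := by
  have step : ∀ i ∈ range (n+1),
      (k+N).choose (k+i) * (b.choose i * (N-i).choose (n-i))
      = (k+N).choose (k+n) * (b.choose i * (k+n).choose (n-i)) := by
    intro i hi
    have hi' : i ≤ n := Nat.lt_succ_iff.mp (mem_range.mp hi)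
    have h1 := choose_shift (k := k) hi' hn
    have h2 : (k+n).choose (k+i) = (k+n).choose (n-i) := by
      rw [← Nat.choose_symm (by omega : k+i ≤ k+n)]
      congr 1; omega
    calc (k+N).choose (k+i) * (b.choose i * (N-i).choose (n-i))
        = ((k+N).choose (k+i) * (N-i).choose (n-i)) * b.choose i := by ring
      _ = ((k+N).choose (k+n) * (k+n).choose (k+i)) * b.choose i := by rw [h1]
      _ = (k+N).choose (k+n) * (b.choose i * (k+n).choose (n-i)) := by rw [h2]; ring
  rw [Finset.sum_congr rfl step, ← Finset.mul_sum]
  congr 1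
  have hv := Nat.add_choose_eq b (k+n) n
  rw [Finset.Nat.sum_antidiagonal_eq_sum_range_succ_mk] at hv
  rw [← hv]
  congr 1
  omega

/-- the central polynomial identity -/
lemma key (N b k : ℕ) (x : ℝ) :
    ∑ r ∈ range (N+1),
      (-1:ℝ)^r * ((k+N).choose (k+r) : ℝ) * (b.choose r : ℝ) * x^r * (1-x)^(N-r)
    = ∑ n ∈ range (N+1),
      (-1:ℝ)^n * ((k+N).choose (k+n) : ℝ) * ((b+k+n).choose n : ℝ) * x^n := by
  set G : ℕ → ℕ → ℝ := fun r j =>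
    (-1:ℝ)^(r+j) * ((k+N).choose (k+r) : ℝ) * (b.choose r : ℝ) * ((N-r).choose j : ℝ) * x^(r+j)
    with hG
  have lhs_eq : ∀ r ∈ range (N+1),
      (-1:ℝ)^r * ((k+N).choose (k+r) : ℝ) * (b.choose r : ℝ) * x^r * (1-x)^(N-r)
      = ∑ j ∈ range (N-r+1), G r j := by
    intro r hr
    have hx : (1-x)^(N-r) = ∑ j ∈ range (N-r+1), (-x)^j * ((N-r).choose j : ℝ) := by
      have h := add_pow (-x) (1:ℝ) (N-r)
      simp only [one_pow, mul_one, neg_add_eq_sub] at h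
      exact h
    rw [hx, Finset.mul_sum]
    refine Finset.sum_congr rfl fun j hj => ?_
    rw [hG]
    simp only [neg_pow x j, pow_add]
    ring
  rw [Finset.sum_congr rfl lhs_eq, Finset.sum_sigma']
  have rhs_eq : ∀ n ∈ range (N+1),
      (-1:ℝ)^n * ((k+N).choose (k+n) : ℝ) * ((b+k+n).choose n : ℝ) * x^n
      = ∑ i ∈ range (n+1), G i (n-i) := by
    intro n hn
    have hn' : n ≤ N := Nat.lt_succ_iff.mp (mem_range.mp hn)
    have inner : ∀ i ∈ range (n+1),
        G i (n-i) = ((-1:ℝ)^n * x^n) *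
          (((k+N).choose (k+i) * (b.choose i * (N-i).choose (n-i)) : ℕ) : ℝ) := by
      intro i hi
      have hi' : i ≤ n := Nat.lt_succ_iff.mp (mem_range.mp hi)
      rw [hG]
      simp only
      rw [Nat.add_sub_cancel' hi']
      push_cast
      ring
    rw [Finset.sum_congr rfl inner, ← Finset.mul_sum, ← Nat.cast_sum,
      vandermonde_aux b hn']
    push_cast
    ring
  rw [Finset.sum_congr rfl rhs_eq, Finset.sum_sigma']
  refine Finset.sum_nbij' (fun p => ⟨p.1 + p.2, p.1⟩) (fun q => ⟨q.2, q.1 - q.2⟩)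
    ?_ ?_ ?_ ?_ ?_
  · rintro ⟨r, j⟩ hp
    simp only [mem_sigma, mem_range] at hp ⊢
    omega
  · rintro ⟨n, i⟩ hq
    simp only [mem_sigma, mem_range] at hq ⊢
    omega
  · rintro ⟨r, j⟩ hp
    simp only [mem_sigma, mem_range] at hp
    have h1 : r + j - r = j := by omega
    simp [h1]
  · rintro ⟨n, i⟩ hq
    simp only [mem_sigma, mem_range] at hq
    have h1 : i + (n - i) = n := by omega
    simp [h1]
  · rintro ⟨r, j⟩ hp
    simp only [mem_sigma, mem_range] at hp
    simp only [Nat.add_sub_cancel_left]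

lemma neg_one_zpow_sub (b n : ℕ) : (-1:ℝ)^((b:ℤ) - (n:ℤ)) = (-1:ℝ)^b * (-1:ℝ)^n := by
  rw [zpow_sub₀ (by norm_num : (-1:ℝ) ≠ 0), zpow_natCast, zpow_natCast, div_eq_mul_inv, ← inv_pow]
  norm_num

end Aux

/-- Jacobi/hypergeometric representation of `U_l^{m,s}` for `m + s ≥ 0`:
`U_l^{m,s}(ε) = (-1)^{l-m} C(l+m, l-s) cos^{m+s}(ε/2) sin^{s-m}(ε/2)
  ₂F₁(-l+s, l+s+1, m+s+1; cos²(ε/2))` for all `ε ∈ (0, π)`. -/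
theorem stmt_9 (l m s : ℤ) (hl : 0 ≤ l) (hm : -l ≤ m) (hml : m ≤ l)
    (hs : -l ≤ s) (hsl : s ≤ l) (hms : 0 ≤ m + s) (ε : ℝ)
    (hε0 : 0 < ε) (hεπ : ε < Real.pi) :
    Ucoef l m s ε
      = (-1 : ℝ) ^ (l - m) * ((l + m).toNat.choose (l - s).toNat : ℝ) *
        Real.cos (ε / 2) ^ (m + s) * Real.sin (ε / 2) ^ (s - m) *
        hyp2F1 ((-l + s : ℤ) : ℝ) ((l + s + 1 : ℤ) : ℝ) ((m + s + 1 : ℤ) : ℝ)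
          (Real.cos (ε / 2) ^ 2) := by
  have hπ := Real.pi_pos
  have hc : 0 < Real.cos (ε/2) :=
    Real.cos_pos_of_mem_Ioo ⟨by linarith, by linarith⟩
  have hs' : 0 < Real.sin (ε/2) :=
    Real.sin_pos_of_pos_of_lt_pi (by linarith) (by linarith)
  obtain ⟨b, hbZ⟩ : ∃ b : ℕ, (b:ℤ) = l - m := ⟨(l-m).toNat, Int.toNat_of_nonneg (by omega)⟩
  obtain ⟨k, hkZ⟩ : ∃ k : ℕ, (k:ℤ) = m + s := ⟨(m+s).toNat, Int.toNat_of_nonneg (by omega)⟩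
  obtain ⟨N, hNZ⟩ : ∃ N : ℕ, (N:ℤ) = l - s := ⟨(l-s).toNat, Int.toNat_of_nonneg (by omega)⟩
  have hta : (l+m).toNat = k + N := by omega
  have htN : (l-s).toNat = N := by omega
  have htb : (l-m).toNat = b := by omega
  simp only [Ucoef, hta, htN, htb]
  set c := Real.cos (ε/2) with hc_def
  set s' := Real.sin (ε/2) with hs'_def
  have hsq : s'^2 = 1 - c^2 := Real.sin_sq (ε/2)
  -- bounds of the sum
  have hmax : max 0 (-(m+s)) = (0:ℤ) := by omega
  have hmin : min (l-s) (l-m) = ((min N b : ℕ):ℤ) := by push_cast; omega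
  rw [hmax, hmin]
  -- step 1: reindex over ℕ and normalize each term
  have step1 : ∑ r ∈ Finset.Icc (0:ℤ) ((min N b : ℕ):ℤ),
        (-1 : ℝ) ^ (l - m - r) * ((k+N).choose (m + s + r).toNat : ℝ) *
          (b.choose r.toNat : ℝ) * c ^ (m + s + 2 * r) * s' ^ (-(m + s) + 2 * (l - r))
      = ∑ n ∈ range (min N b + 1),
          ((-1:ℝ)^b * c^k * s'^(s-m)) *
            ((-1:ℝ)^n * ((k+N).choose (k+n):ℝ) * (b.choose n :ℝ) * (c^2)^n * (1-c^2)^(N-n)) := by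
    refine Finset.sum_nbij' (fun r => r.toNat) (fun n => (n:ℤ)) ?_ ?_ ?_ ?_ ?_
    · intro r hr
      simp only [Finset.mem_Icc] at hr
      simp only [Finset.mem_range]
      omega
    · intro n hn
      simp only [Finset.mem_range] at hn
      simp only [Finset.mem_Icc]
      omega
    · intro r hr
      simp only [Finset.mem_Icc] at hr
      show ((r.toNat : ℕ) : ℤ) = r
      omega
    · intro n _
      simp
    · intro r hr
      simp only [Finset.mem_Icc] at hr
      obtain ⟨n, rfl⟩ : ∃ n : ℕ, r = (n:ℤ) := ⟨r.toNat, by omega⟩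
      simp only [Int.toNat_natCast]
      have hnN : n ≤ N := by omega
      have e1 : l - m - (n:ℤ) = (b:ℤ) - (n:ℤ) := by omega
      have e2 : (m + s + (n:ℤ)).toNat = k + n := by omega
      have e3 : m + s + 2*(n:ℤ) = ((k + 2*n : ℕ):ℤ) := by push_cast; omega
      have e4 : -(m+s) + 2*(l - (n:ℤ)) = (s - m) + ((2*(N-n) : ℕ):ℤ) := by
        have : ((2*(N-n) : ℕ):ℤ) = 2*((N:ℤ) - (n:ℤ)) := by
          push_cast [Nat.cast_sub hnN]; ring
        omega
      rw [e1, e2, e3, e4, neg_one_zpow_sub,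
        zpow_natCast, zpow_add₀ (ne_of_gt hs'), zpow_natCast]
      rw [pow_add c k (2*n), pow_mul c 2 n, pow_mul s' 2 (N-n), hsq]
      ring
  rw [step1]
  -- step 2: extend the summation range to N+1
  have step2 : ∑ n ∈ range (min N b + 1),
        ((-1:ℝ)^b * c^k * s'^(s-m)) *
          ((-1:ℝ)^n * ((k+N).choose (k+n):ℝ) * (b.choose n :ℝ) * (c^2)^n * (1-c^2)^(N-n))
      = ∑ n ∈ range (N + 1),
          ((-1:ℝ)^b * c^k * s'^(s-m)) *
            ((-1:ℝ)^n * ((k+N).choose (k+n):ℝ) * (b.choose n :ℝ) * (c^2)^n * (1-c^2)^(N-n)) := by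
    refine Finset.sum_subset (Finset.range_subset_range.mpr (by omega)) ?_
    intro n hn hn'
    simp only [Finset.mem_range] at hn hn'
    have hb : b < n := by omega
    rw [Nat.choose_eq_zero_of_lt hb]
    simp
  rw [step2, ← Finset.mul_sum]
  have step3 : ∑ n ∈ range (N + 1),
        ((-1:ℝ)^n * ((k+N).choose (k+n):ℝ) * (b.choose n :ℝ) * (c^2)^n * (1-c^2)^(N-n))
      = ∑ n ∈ range (N + 1),
        (-1:ℝ)^n * ((k+N).choose (k+n):ℝ) * ((b+k+n).choose n :ℝ) * (c^2)^n := by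
    exact key N b k (c^2)
  rw [step3]
  -- now rewrite the RHS using hyp2F1_term
  have e5 : (-1:ℝ)^(l-m) = (-1:ℝ)^b := by
    rw [← hbZ, zpow_natCast]
  have e6 : c^(m+s) = c^k := by
    rw [← hkZ, zpow_natCast]
  have e7 : ((-l + s : ℤ):ℝ) = -(N:ℝ) := by
    have h : (-l + s : ℤ) = -((N:ℕ):ℤ) := by omega
    rw [h]; push_cast; ring
  have e8 : ((l + s + 1 : ℤ):ℝ) = ((b+k : ℕ):ℝ) + 1 := by
    have h : (l + s + 1 : ℤ) = ((b+k:ℕ):ℤ) + 1 := by push_cast; omega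
    rw [h]; push_cast; ring
  have e9 : ((m + s + 1 : ℤ):ℝ) = ((k:ℕ):ℝ) + 1 := by
    have h : (m + s + 1 : ℤ) = ((k:ℕ):ℤ) + 1 := by omega
    rw [h]; push_cast; ring
  rw [e5, e6, e7, e8, e9]
  calc ((-1:ℝ)^b * c^k * s'^(s-m)) *
        ∑ n ∈ range (N + 1),
          (-1:ℝ)^n * ((k+N).choose (k+n):ℝ) * ((b+k+n).choose n :ℝ) * (c^2)^n
      = ((-1:ℝ)^b * c^k * s'^(s-m)) *
          ((((k+N).choose N : ℕ):ℝ) *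
            hyp2F1 (-(N:ℝ)) (((b+k:ℕ):ℝ)+1) ((k:ℝ)+1) (c^2)) := by
        rw [hyp2F1_term N b k (c^2)]
    _ = (-1:ℝ)^b * ((k+N).choose N : ℝ) * c^k * s'^(s-m) *
          hyp2F1 (-(N:ℝ)) (((b+k:ℕ):ℝ)+1) ((k:ℝ)+1) (c^2) := by
        push_cast
        ring
end

section
/- Let Θ(l,m,p,s,q) be defined piecewise by: if m even and l-m even: Θ = ½[(-1)^s U⁻ cos(θ+θ') + U⁺ cos(θ-θ')] for l-s even, and ½[(-1)^s U⁻ sin(θ+θ') - U⁺ sin(θ-θ')] for l-s odd; if (m even, l-m odd) or (m odd, l-m even): Θ = ½[(-1)^s U⁻ sin(θ+θ') + U⁺ sin(θ-θ')] for l-s even, and ½[-(-1)^s U⁻ cos(θ+θ') + U⁺ cos(θ-θ')] for l-s odd; if m odd and l-m odd: Θ = ½[-(-1)^s U⁻ cos(θ+θ') - U⁺ cos(θ-θ')] for l-s even, and ½[-(-1)^s U⁻ sin(θ+θ') + U⁺ sin(θ-θ')] for l-s odd. Then in all cases Θ = ½[(-1)^{k₂} U⁻ cos(θ+θ' - y_s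 π) + (-1)^{k₃} U⁺ cos(θ-θ' - y_s π)], where t = (l-1) mod 2, k₂ = t(m+s-1)+1, k₃ = t(m+s), and y_s = 0 for s even, y_s = 1/2 for s odd. -/
open Real

private lemma negone_zpow_even' {n : ℤ} (h : n % 2 = 0) : (-1 : ℝ) ^ n = 1 :=
  (Int.even_iff.mpr h).neg_one_zpow

private lemma negone_zpow_odd' {n : ℤ} (h : n % 2 = 1) : (-1 : ℝ) ^ n = -1 :=
  (Int.odd_iff.mpr h).neg_one_zpow

private lemma cos_shift_half (x : ℝ) : Real.cos (x - 1 / 2 * Real.pi) = Real.sin x := by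
  rw [show x - 1 / 2 * Real.pi = x - Real.pi / 2 by ring, Real.cos_sub_pi_div_two]

/-- Lane's Lemma 8: the piecewise-defined trigonometric combination
`Θ_{lmpsq}` (eight parity cases in `m`, `l-m`, `l-s`) equals the single
formula `½[(-1)^{k₂} U⁻ cos(θ+θ'-y_sπ) + (-1)^{k₃} U⁺ cos(θ-θ'-y_sπ)]`
with `t = (l-1) mod 2`, `k₂ = t(m+s-1)+1`, `k₃ = t(m+s)`, and `y_s = 0`
for even `s`, `y_s = 1/2` for odd `s`. -/
theorem stmt_12 (l m s : ℤ) (hl : 2 ≤ l) (hm0 : 0 ≤ m) (hml : m ≤ l)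
    (hs0 : 0 ≤ s) (hsl : s ≤ l)
    (θ θ' Up Um : ℝ) (t k₂ k₃ : ℤ) (ys T : ℝ)
    (ht : t = (l - 1) % 2) (hk₂ : k₂ = t * (m + s - 1) + 1) (hk₃ : k₃ = t * (m + s))
    (hys : ys = if Even s then (0 : ℝ) else 1 / 2)
    (hT : T = 1 / 2 * ((-1 : ℝ) ^ k₂ * Um * Real.cos (θ + θ' - ys * Real.pi)
      + (-1 : ℝ) ^ k₃ * Up * Real.cos (θ - θ' - ys * Real.pi))) :
    (Even m → Even (l - m) → Even (l - s) →
      1 / 2 * ((-1 : ℝ) ^ s * Um * Real.cos (θ + θ') + Up * Real.cos (θ - θ')) = T) ∧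
    (Even m → Even (l - m) → Odd (l - s) →
      1 / 2 * ((-1 : ℝ) ^ s * Um * Real.sin (θ + θ') - Up * Real.sin (θ - θ')) = T) ∧
    ((Even m ∧ Odd (l - m)) ∨ (Odd m ∧ Even (l - m)) → Even (l - s) →
      1 / 2 * ((-1 : ℝ) ^ s * Um * Real.sin (θ + θ') + Up * Real.sin (θ - θ')) = T) ∧
    ((Even m ∧ Odd (l - m)) ∨ (Odd m ∧ Even (l - m)) → Odd (l - s) →
      1 / 2 * (-(-1 : ℝ) ^ s * Um * Real.cos (θ + θ') + Up * Real.cos (θ - θ')) = T) ∧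
    (Odd m → Odd (l - m) → Even (l - s) →
      1 / 2 * (-(-1 : ℝ) ^ s * Um * Real.cos (θ + θ') - Up * Real.cos (θ - θ')) = T) ∧
    (Odd m → Odd (l - m) → Odd (l - s) →
      1 / 2 * (-(-1 : ℝ) ^ s * Um * Real.sin (θ + θ') + Up * Real.sin (θ - θ')) = T) := by
  refine ⟨?_, ?_, ?_, ?_, ?_, ?_⟩
  · -- m even, l-m even, l-s even : l even, s even, t = 1
    intro hm hlm hls
    have hm' := Int.even_iff.mp hm
    have hlm' := Int.even_iff.mp hlm
    have hls' := Int.even_iff.mp hls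
    have htv : t = 1 := by rw [ht]; omega
    rw [htv] at hk₂ hk₃
    have hse : Even s := Int.even_iff.mpr (by omega)
    have h2 : (-1 : ℝ) ^ k₂ = 1 := negone_zpow_even' (by omega)
    have h3 : (-1 : ℝ) ^ k₃ = 1 := negone_zpow_even' (by omega)
    have hs : (-1 : ℝ) ^ s = 1 := hse.neg_one_zpow
    rw [hT, hys, if_pos hse, h2, h3, hs]
    simp only [zero_mul, sub_zero]; ring
  · -- m even, l-m even, l-s odd : l even, s odd, t = 1
    intro hm hlm hls
    have hm' := Int.even_iff.mp hm
    have hlm' := Int.even_iff.mp hlm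
    have hls' := Int.odd_iff.mp hls
    have htv : t = 1 := by rw [ht]; omega
    rw [htv] at hk₂ hk₃
    have hso : Odd s := Int.odd_iff.mpr (by omega)
    have h2 : (-1 : ℝ) ^ k₂ = -1 := negone_zpow_odd' (by omega)
    have h3 : (-1 : ℝ) ^ k₃ = -1 := negone_zpow_odd' (by omega)
    have hs : (-1 : ℝ) ^ s = -1 := hso.neg_one_zpow
    rw [hT, hys, if_neg (Int.not_even_iff_odd.mpr hso), h2, h3, hs,
      cos_shift_half, cos_shift_half]
    ring
  · -- mixed parity : l odd, t = 0 ; l-s even ⇒ s odd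
    intro hmm hls
    have hls' := Int.even_iff.mp hls
    have hlo : l % 2 = 1 := by
      rcases hmm with ⟨hm, hlm⟩ | ⟨hm, hlm⟩
      · have := Int.even_iff.mp hm; have := Int.odd_iff.mp hlm; omega
      · have := Int.odd_iff.mp hm; have := Int.even_iff.mp hlm; omega
    have htv : t = 0 := by rw [ht]; omega
    rw [htv] at hk₂ hk₃
    have hso : Odd s := Int.odd_iff.mpr (by omega)
    have h2 : (-1 : ℝ) ^ k₂ = -1 := negone_zpow_odd' (by omega)
    have h3 : (-1 : ℝ) ^ k₃ = 1 := negone_zpow_even' (by omega)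
    have hs : (-1 : ℝ) ^ s = -1 := hso.neg_one_zpow
    rw [hT, hys, if_neg (Int.not_even_iff_odd.mpr hso), h2, h3, hs,
      cos_shift_half, cos_shift_half]
    ring
  · -- mixed parity : l odd, t = 0 ; l-s odd ⇒ s even
    intro hmm hls
    have hls' := Int.odd_iff.mp hls
    have hlo : l % 2 = 1 := by
      rcases hmm with ⟨hm, hlm⟩ | ⟨hm, hlm⟩
      · have := Int.even_iff.mp hm; have := Int.odd_iff.mp hlm; omega
      · have := Int.odd_iff.mp hm; have := Int.even_iff.mp hlm; omega
    have htv : t = 0 := by rw [ht]; omega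
    rw [htv] at hk₂ hk₃
    have hse : Even s := Int.even_iff.mpr (by omega)
    have h2 : (-1 : ℝ) ^ k₂ = -1 := negone_zpow_odd' (by omega)
    have h3 : (-1 : ℝ) ^ k₃ = 1 := negone_zpow_even' (by omega)
    have hs : (-1 : ℝ) ^ s = 1 := hse.neg_one_zpow
    rw [hT, hys, if_pos hse, h2, h3, hs]
    simp only [zero_mul, sub_zero]; ring
  · -- m odd, l-m odd, l-s even : l even, s even, t = 1, m+s odd
    intro hm hlm hls
    have hm' := Int.odd_iff.mp hm
    have hlm' := Int.odd_iff.mp hlm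
    have hls' := Int.even_iff.mp hls
    have htv : t = 1 := by rw [ht]; omega
    rw [htv] at hk₂ hk₃
    have hse : Even s := Int.even_iff.mpr (by omega)
    have h2 : (-1 : ℝ) ^ k₂ = -1 := negone_zpow_odd' (by omega)
    have h3 : (-1 : ℝ) ^ k₃ = -1 := negone_zpow_odd' (by omega)
    have hs : (-1 : ℝ) ^ s = 1 := hse.neg_one_zpow
    rw [hT, hys, if_pos hse, h2, h3, hs]
    simp only [zero_mul, sub_zero]; ring
  · -- m odd, l-m odd, l-s odd : l even, s odd, t = 1, m+s even
    intro hm hlm hls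
    have hm' := Int.odd_iff.mp hm
    have hlm' := Int.odd_iff.mp hlm
    have hls' := Int.odd_iff.mp hls
    have htv : t = 1 := by rw [ht]; omega
    rw [htv] at hk₂ hk₃
    have hso : Odd s := Int.odd_iff.mpr (by omega)
    have h2 : (-1 : ℝ) ^ k₂ = 1 := negone_zpow_even' (by omega)
    have h3 : (-1 : ℝ) ^ k₃ = 1 := negone_zpow_even' (by omega)
    have hs : (-1 : ℝ) ^ s = -1 := hso.neg_one_zpow
    rw [hT, hys, if_neg (Int.not_even_iff_odd.mpr hso), h2, h3, hs,
      cos_shift_half, cos_shift_half]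
    ring
end
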